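/- arXiv:1307.2430 — 2 statements merged into one kernel-verified Lean document; each statement's English description precedes it below -/
import Mathlib

section
/- Let (Ω, μ) be a probability space and let X : Ω → Matrix (Fin n) (Fin n) ℂ be such that X ω is Hermitian positive definite for every ω, each entry ω ↦ X ω i j is integrable, and ω ↦ log(Re(det(X ω))) is integrable. Then the entrywise integral ∫ X dμ is Hermitian positive definite and ∫ log(Re(det(X ω))) dμ(ω) ≤ log(Re(det(∫ X dμ))). (Jensen's inequality for the concave function log det, the step E[log|I + H Hᴴ K|] ≤ log|I + E[H Hᴴ]K| in the proof of the paper's Lemma 4.) -/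
open Matrix MeasureTheory
open scoped ComplexOrder

/-!
`log det` is concave on positive definite matrices, with tangent-plane bound
`log det A ≤ log det B + tr (B⁻¹ A) - n` at `B`: writing `C = B^{-1/2} A B^{-1/2}`, this is
`log det C ≤ tr C - n`, i.e. `log λ ≤ λ - 1` summed over the eigenvalues of `C`. Taking `B` to be
the mean `M = E[X]` (positive definite, since `xᴴ M x = E[xᴴ X x]`) and integrating, the trace
term averages to `tr (M⁻¹ M) - n = 0`.
-/

lemma MeasureTheory.integral_pos_of_forall_pos {α : Type*} [MeasurableSpace α] {μ : Measure α}
    [NeZero μ] {f : α → ℝ} (hf : Integrable f μ) (hpos : ∀ x, 0 < f x) : 0 < ∫ x, f x ∂μ := by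
  rw [integral_pos_iff_support_of_nonneg (fun x => (hpos x).le) hf,
    Function.support_eq_univ fun x => (hpos x).ne']
  exact Measure.measure_univ_pos.mpr (NeZero.ne μ)

namespace Matrix

section LogDet

variable {n 𝕜 : Type*} [Fintype n] [DecidableEq n] [RCLike 𝕜] {A B : Matrix n n 𝕜}

lemma IsHermitian.re_det_eq_prod_eigenvalues (hA : A.IsHermitian) :
    RCLike.re A.det = ∏ i, hA.eigenvalues i := by
  rw [hA.det_eq_prod_eigenvalues, ← RCLike.ofReal_prod, RCLike.ofReal_re]

lemma IsHermitian.re_trace_eq_sum_eigenvalues (hA : A.IsHermitian) :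
    RCLike.re A.trace = ∑ i, hA.eigenvalues i := by
  rw [hA.trace_eq_sum_eigenvalues, ← RCLike.ofReal_sum, RCLike.ofReal_re]

lemma PosDef.log_re_det_le_re_trace_sub_card (hA : A.PosDef) :
    Real.log (RCLike.re A.det) ≤ RCLike.re A.trace - Fintype.card n := by
  rw [hA.1.re_det_eq_prod_eigenvalues, hA.1.re_trace_eq_sum_eigenvalues,
    Real.log_prod fun i _ => (hA.eigenvalues_pos i).ne']
  calc ∑ i, Real.log (hA.1.eigenvalues i)
      ≤ ∑ i, (hA.1.eigenvalues i - 1) :=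
        Finset.sum_le_sum fun i _ => Real.log_le_sub_one_of_pos (hA.eigenvalues_pos i)
    _ = ∑ i, hA.1.eigenvalues i - Fintype.card n := by simp [Finset.sum_sub_distrib]

open scoped MatrixOrder in
lemma PosDef.log_re_det_le_add_re_trace_inv_mul (hA : A.PosDef) (hB : B.PosDef) :
    Real.log (RCLike.re A.det) ≤
      Real.log (RCLike.re B.det) + RCLike.re (B⁻¹ * A).trace - Fintype.card n := by
  set S := CFC.sqrt B
  have hSS : S * S = B := CFC.sqrt_mul_sqrt_self B hB.posSemidef.nonneg
  have hS : IsUnit S := isUnit_of_mul_isUnit_left (hSS ▸ hB.isUnit)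
  have hSinv : (S⁻¹).IsHermitian := (CFC.sqrt_nonneg B).posSemidef.1.inv
  set C := S⁻¹ * A * S⁻¹
  have hC : C.PosDef := by
    simpa only [hSinv.eq] using
      hA.conjTranspose_mul_mul_same (mulVec_injective_of_isUnit (isUnit_nonsing_inv_iff.mpr hS))
  have hdet : A.det = B.det * C.det := by
    have hSdet : S.det * S⁻¹.det = 1 := by
      rw [← det_mul, mul_nonsing_inv _ ((isUnit_iff_isUnit_det S).mp hS), det_one]
    simp only [C, ← hSS, det_mul]
    linear_combination -A.det * (S.det * S⁻¹.det + 1) * hSdet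
  have htrace : (B⁻¹ * A).trace = C.trace := by
    rw [← hSS, mul_inv_rev, mul_assoc, trace_mul_comm]
  rw [hdet, RCLike.mul_re, (RCLike.pos_iff.mp hC.det_pos).2, mul_zero, sub_zero,
    Real.log_mul (RCLike.pos_iff.mp hB.det_pos).1.ne' (RCLike.pos_iff.mp hC.det_pos).1.ne', htrace]
  linarith [hC.log_re_det_le_re_trace_sub_card]

end LogDet

variable {m n R : Type*}

lemma star_dotProduct_mulVec_eq_trace [Fintype n] [CommSemiring R] [StarRing R]
    (A : Matrix n n R) (x : n → R) : star x ⬝ᵥ A *ᵥ x = (vecMulVec x (star x) * A).trace := by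
  rw [trace_mul_comm, mul_vecMulVec, trace_vecMulVec, dotProduct_comm]

lemma linearMap_apply_eq_sum_entries [Fintype m] [Fintype n] [DecidableEq m] [DecidableEq n]
    [CommSemiring R] (L : Matrix m n R →ₗ[R] R) (A : Matrix m n R) :
    L A = ∑ i, ∑ j, A i j * L (single i j 1) := by
  conv_lhs => rw [matrix_eq_sum_single A]
  simp only [map_sum]
  refine Finset.sum_congr rfl fun i _ => Finset.sum_congr rfl fun j _ => ?_
  rw [← smul_eq_mul, ← L.map_smul, smul_single, smul_eq_mul, mul_one]

variable {Ω 𝕜 : Type*} [MeasurableSpace Ω] {μ : Measure Ω} [RCLike 𝕜]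

noncomputable def entrywiseIntegral (μ : Measure Ω) (X : Ω → Matrix m n 𝕜) : Matrix m n 𝕜 :=
  of fun i j => ∫ ω, X ω i j ∂μ

lemma isHermitian_entrywiseIntegral {X : Ω → Matrix n n 𝕜} (hX : ∀ ω, (X ω).IsHermitian) :
    (entrywiseIntegral μ X).IsHermitian := by
  ext i j
  simp only [entrywiseIntegral, conjTranspose_apply, of_apply, RCLike.star_def,
    ← integral_conj, ← (hX _).apply i j]

section

variable [Fintype m] [Fintype n] {X : Ω → Matrix m n 𝕜}

lemma integrable_linearMap_comp (hX : ∀ i j, Integrable (fun ω => X ω i j) μ)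
    (L : Matrix m n 𝕜 →ₗ[𝕜] 𝕜) : Integrable (fun ω => L (X ω)) μ := by
  classical
  simp_rw [linearMap_apply_eq_sum_entries L (X _)]
  exact integrable_finsetSum _ fun i _ =>
    integrable_finsetSum _ fun j _ => (hX i j).mul_const _

lemma integral_linearMap_comp (hX : ∀ i j, Integrable (fun ω => X ω i j) μ)
    (L : Matrix m n 𝕜 →ₗ[𝕜] 𝕜) : ∫ ω, L (X ω) ∂μ = L (entrywiseIntegral μ X) := by
  classical
  simp_rw [linearMap_apply_eq_sum_entries L (X _),
    linearMap_apply_eq_sum_entries L (entrywiseIntegral μ X)]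
  rw [integral_finsetSum _ fun i _ => integrable_finsetSum _ fun j _ => (hX i j).mul_const _]
  refine Finset.sum_congr rfl fun i _ => ?_
  rw [integral_finsetSum _ fun j _ => (hX i j).mul_const _]
  exact Finset.sum_congr rfl fun j _ => integral_mul_const _ _

end

variable [Fintype n] {X : Ω → Matrix n n 𝕜}

lemma integrable_trace_mul (hX : ∀ i j, Integrable (fun ω => X ω i j) μ) (B : Matrix n n 𝕜) :
    Integrable (fun ω => (B * X ω).trace) μ :=
  integrable_linearMap_comp hX (traceLinearMap n 𝕜 𝕜 ∘ₗ LinearMap.mulLeft 𝕜 B)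

lemma integral_trace_mul (hX : ∀ i j, Integrable (fun ω => X ω i j) μ) (B : Matrix n n 𝕜) :
    ∫ ω, (B * X ω).trace ∂μ = (B * entrywiseIntegral μ X).trace :=
  integral_linearMap_comp hX (traceLinearMap n 𝕜 𝕜 ∘ₗ LinearMap.mulLeft 𝕜 B)

lemma posDef_entrywiseIntegral [NeZero μ] (hX : ∀ i j, Integrable (fun ω => X ω i j) μ)
    (hPD : ∀ ω, (X ω).PosDef) : (entrywiseIntegral μ X).PosDef := by
  have hH := isHermitian_entrywiseIntegral (μ := μ) fun ω => (hPD ω).1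
  refine PosDef.of_dotProduct_mulVec_pos hH fun x hx =>
    RCLike.pos_iff.mpr ⟨?_, hH.im_star_dotProduct_mulVec_self x⟩
  have hq (A : Matrix n n 𝕜) : star x ⬝ᵥ A *ᵥ x = (vecMulVec x (star x) * A).trace :=
    star_dotProduct_mulVec_eq_trace A x
  rw [hq, ← integral_trace_mul hX, ← integral_re (integrable_trace_mul hX _)]
  refine integral_pos_of_forall_pos (integrable_trace_mul hX _).re fun ω => ?_
  rw [← hq]
  exact (hPD ω).re_dotProduct_pos hx

theorem integral_log_re_det_le_log_re_det_entrywiseIntegral [DecidableEq n]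
    [IsProbabilityMeasure μ] (hX : ∀ i j, Integrable (fun ω => X ω i j) μ)
    (hPD : ∀ ω, (X ω).PosDef)
    (hLog : Integrable (fun ω => Real.log (RCLike.re (X ω).det)) μ) :
    ∫ ω, Real.log (RCLike.re (X ω).det) ∂μ ≤ Real.log (RCLike.re (entrywiseIntegral μ X).det) := by
  set M := entrywiseIntegral μ X
  have hM : M.PosDef := posDef_entrywiseIntegral hX hPD
  have htr : Integrable (fun ω => RCLike.re (M⁻¹ * X ω).trace) μ :=
    (integrable_trace_mul hX M⁻¹).re
  have hsum : Integrable (fun ω => Real.log (RCLike.re M.det) + RCLike.re (M⁻¹ * X ω).trace) μ :=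
    (integrable_const _).add htr
  have hmean : ∫ ω, RCLike.re (M⁻¹ * X ω).trace ∂μ = Fintype.card n := by
    rw [integral_re (integrable_trace_mul hX M⁻¹), integral_trace_mul hX,
      nonsing_inv_mul _ ((isUnit_iff_isUnit_det M).mp hM.isUnit), trace_one]
    simp
  calc ∫ ω, Real.log (RCLike.re (X ω).det) ∂μ
      ≤ ∫ ω, (Real.log (RCLike.re M.det) + RCLike.re (M⁻¹ * X ω).trace - Fintype.card n) ∂μ :=
        integral_mono hLog (hsum.sub (integrable_const _))
          fun ω => (hPD ω).log_re_det_le_add_re_trace_inv_mul hM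
    _ = Real.log (RCLike.re M.det) := by
        rw [integral_sub hsum (integrable_const _), integral_add (integrable_const _) htr, hmean]
        simp

end Matrix

/-- Jensen's inequality for the concave function `log det`: if `X` is a
matrix-valued map on a probability space with `X ω` Hermitian positive definite for all
`ω`, integrable entries, and integrable `log (det (X ω))`, then the entrywise integral
of `X` is positive definite and `∫ log (det (X ω)) dμ ≤ log (det (∫ X dμ))`. -/
theorem integral_logDet_le_logDet_integral {n : ℕ} {Ω : Type*} [MeasurableSpace Ω]
    (μ : Measure Ω) [IsProbabilityMeasure μ] (X : Ω → Matrix (Fin n) (Fin n) ℂ)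
    (hPD : ∀ ω, (X ω).PosDef)
    (hEntries : ∀ i j, Integrable (fun ω => X ω i j) μ)
    (hLog : Integrable (fun ω => Real.log ((X ω).det.re)) μ) :
    ∃ _ : (Matrix.of fun i j => ∫ ω, X ω i j ∂μ).PosDef,
      ∫ ω, Real.log ((X ω).det.re) ∂μ ≤
        Real.log ((Matrix.of fun i j => ∫ ω, X ω i j ∂μ).det.re) :=
  ⟨posDef_entrywiseIntegral hEntries hPD,
    integral_log_re_det_le_log_re_det_entrywiseIntegral hEntries hPD hLog⟩
end

section
/- Let b : Matrix (Fin N) (Fin n) ℂ, T : Matrix (Fin n) (Fin N) ℂ, let K : Matrix (Fin n) (Fin n) ℂ be positive semidefinite, and let h : Fin n → ℂ. Then the (N+1)×(N+1) block matrix M = [[I_N + b*K*bᴴ, (Tᴴ + b*K) *ᵥ h], [(star h) ᵥ* (T + K*bᴴ), 1 + (star h) ⬝ᵥ ((T*Tᴴ + K) *ᵥ h)]] (built with Matrix.fromBlocks, with top-right the column (Tᴴ + bK)h, bottom-left the row hᴴ(T + K bᴴ), and bottom-right the 1×1 scalar 1 + hᴴ(T Tᴴ + K)h) is Hermitian positive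 definite. (This guarantees that the term log|M| in the secrecy rate bound Δ of the paper's Lemma 3, equations (13)–(14), is well defined.) -/
open Matrix
open scoped ComplexOrder

/-!
Write `C = [[1, Tᴴh], [0, 1]]` and `G = [bᴴ | h]`. Expanding the blocks gives
`M = Cᴴ C + Gᴴ K G`: the first summand is positive definite because `C` is unipotent, hence
invertible, and the second is positive semidefinite because `K` is.
-/

namespace Matrix

variable {R : Type*} [CommRing R] {m n ι : Type*}

lemma isUnit_fromBlocks_one_zero_one [Fintype m] [DecidableEq m] [Fintype ι] [DecidableEq ι]
    (B : Matrix m ι R) : IsUnit (fromBlocks 1 B 0 1 : Matrix (m ⊕ ι) (m ⊕ ι) R) := by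
  simp only [isUnit_iff_isUnit_det, det_fromBlocks_zero₂₁, det_one, mul_one, isUnit_one]

variable [StarRing R]

lemma conjTranspose_fromCols_replicateCol_mul_mul [Fintype n] (B : Matrix n m R)
    (K : Matrix n n R) (v : n → R) :
    (fromCols B (replicateCol ι v))ᴴ * K * fromCols B (replicateCol ι v) =
      fromBlocks (Bᴴ * K * B) (replicateCol ι ((Bᴴ * K) *ᵥ v))
        (replicateRow ι (star v ᵥ* (K * B))) (of fun _ _ => star v ⬝ᵥ (K *ᵥ v)) := by
  rw [conjTranspose_fromCols_eq_fromRows_conjTranspose, fromRows_mul, fromRows_mul_fromCols,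
    conjTranspose_replicateCol]
  congr 1
  · rw [replicateRow_vecMul, Matrix.mul_assoc]
  · rw [Matrix.mul_assoc, ← replicateCol_mulVec, replicateRow_mul_replicateCol]

lemma conjTranspose_mul_self_fromBlocks_one_replicateCol [Fintype m] [DecidableEq m]
    [Fintype ι] [DecidableEq ι] (w : m → R) :
    (fromBlocks 1 (replicateCol ι w) 0 1)ᴴ * fromBlocks 1 (replicateCol ι w) 0 1 =
      fromBlocks 1 (replicateCol ι w) (replicateRow ι (star w))
        ((of fun _ _ => star w ⬝ᵥ w) + 1) := by
  rw [fromBlocks_conjTranspose, fromBlocks_multiply]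
  simp only [conjTranspose_one, conjTranspose_zero, conjTranspose_replicateCol, Matrix.one_mul,
    Matrix.mul_one, Matrix.mul_zero, add_zero, replicateRow_mul_replicateCol]

end Matrix

/-- The block matrix `M` appearing in the secrecy rate bound `Δ` of
Lemma 3 is Hermitian positive definite: for `b : N × n`, `T : n × N`, `K : n × n`
positive semidefinite, and `h ∈ ℂⁿ`, the matrix
`[[I + b K bᴴ, (Tᴴ + b K) h], [hᴴ (T + K bᴴ), 1 + hᴴ (T Tᴴ + K) h]]`
is positive definite. -/
theorem posDef_rate_block_matrix {n N : ℕ}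
    (b : Matrix (Fin N) (Fin n) ℂ) (T : Matrix (Fin n) (Fin N) ℂ)
    (K : Matrix (Fin n) (Fin n) ℂ) (hK : K.PosSemidef) (h : Fin n → ℂ) :
    (Matrix.fromBlocks
        ((1 : Matrix (Fin N) (Fin N) ℂ) + b * K * bᴴ)
        (Matrix.of fun i (_ : Fin 1) => ((Tᴴ + b * K) *ᵥ h) i)
        (Matrix.of fun (_ : Fin 1) j => ((star h) ᵥ* (T + K * bᴴ)) j)
        (Matrix.of fun (_ : Fin 1) (_ : Fin 1) =>
          1 + (star h) ⬝ᵥ ((T * Tᴴ + K) *ᵥ h))).PosDef := by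
  set C : Matrix (Fin N ⊕ Fin 1) (Fin N ⊕ Fin 1) ℂ :=
    fromBlocks 1 (replicateCol (Fin 1) (Tᴴ *ᵥ h)) 0 1
  set G := fromCols bᴴ (replicateCol (Fin 1) h)
  convert PosDef.add_posSemidef
    (.conjTranspose_mul_self C (mulVec_injective_iff_isUnit.mpr (isUnit_fromBlocks_one_zero_one _)))
    (hK.conjTranspose_mul_mul_same G) using 1
  rw [conjTranspose_mul_self_fromBlocks_one_replicateCol,
    conjTranspose_fromCols_replicateCol_mul_mul, fromBlocks_add, conjTranspose_conjTranspose]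
  congr 1
  · rw [← replicateCol_add, ← add_mulVec]
    rfl
  · rw [star_mulVec, conjTranspose_conjTranspose, ← replicateRow_add, ← vecMul_add]
    rfl
  · ext i j
    simp only [of_apply, Matrix.add_apply, Subsingleton.elim i j, one_apply_eq, star_mulVec,
      conjTranspose_conjTranspose, ← dotProduct_mulVec, mulVec_mulVec, add_mulVec, dotProduct_add]
    ring
end
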